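/- Let h, h̲ ∈ W^{1,∞}(0,L) with 0 ≤ h̲ ≤ h ≤ M, m(x) = (h(x)+1)/(h̲(x)+1), and w ∈ H¹(F_h⁻;ℝ²) where F_h⁻ = {(x,y) : 0<x<L, −1<y<h(x)}. Then the vertical-translation difference satisfies ‖w(·, m(·)(·+1)−1) − w‖_{L²(F_{h̲})}² ≤ (M+1) ‖m−1‖_{L^∞(0,L)} ‖h̲‖_{L^∞(0,L)} ‖∇w‖_{L²(F_h⁻)}², where F_{h̲} = {(x,y) : 0<x<L, 0<y<h̲(x)}. -/

import Mathlib

/-!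
For fixed `x`, the point `m(x)(y+1) - 1` lies above `y` at distance `(m(x) - 1)(y + 1) ≤ (M+1)‖m-1‖_∞`
and stays below `h(x)`, so by the fundamental theorem of calculus and Cauchy–Schwarz the squared
difference at `(x, y)` is at most `(M+1)‖m-1‖_∞` times the integral of `‖∂_y w‖²` over the whole
fibre `(-1, h(x))`. Integrating this bound in `y ∈ (0, h̲(x)) ⊆ (0, ‖h̲‖_∞)` and then in `x`
(Tonelli) gives the estimate. Since `h` and `h̲` are not assumed measurable, neither are the
domains nor the integrand on the left, so the argument is run with lower Lebesgue integrals, which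
are monotone without any measurability.
-/

open MeasureTheory Set
open scoped ENNReal

theorem sq_lintegral_le_measure_univ_mul_lintegral_sq {α : Type*} [MeasurableSpace α]
    {μ : Measure α} {f : α → ℝ≥0∞} (hf : AEMeasurable f μ) :
    (∫⁻ a, f a ∂μ) ^ 2 ≤ μ univ * ∫⁻ a, f a ^ 2 ∂μ := by
  have h := ENNReal.lintegral_mul_le_Lp_mul_Lq μ Real.HolderConjugate.two_two hf
    aemeasurable_const (g := 1)
  simp only [Pi.mul_apply, Pi.one_apply, mul_one, ENNReal.one_rpow, lintegral_const,
    one_mul] at h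
  calc (∫⁻ a, f a ∂μ) ^ 2
      ≤ ((∫⁻ a, f a ^ (2 : ℝ) ∂μ) ^ (1 / 2 : ℝ) * μ univ ^ (1 / 2 : ℝ)) ^ 2 := by gcongr
    _ = μ univ * ∫⁻ a, f a ^ 2 ∂μ := by
      rw [mul_pow, ← ENNReal.rpow_mul_natCast, ← ENNReal.rpow_mul_natCast]
      norm_num [mul_comm]

theorem enorm_sub_sq_le_mul_lintegral_deriv_sq {E : Type*} [NormedAddCommGroup E]
    [NormedSpace ℝ E] [CompleteSpace E] {u u' : ℝ → E} {a b : ℝ} (hab : a ≤ b)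
    (hu : ∀ z ∈ uIcc a b, HasDerivAt u (u' z) z) (hu' : IntervalIntegrable u' volume a b) :
    ‖u b - u a‖ₑ ^ 2 ≤ ENNReal.ofReal (b - a) * ∫⁻ z in Ioc a b, ‖u' z‖ₑ ^ 2 := by
  have hftc : u b - u a = ∫ z in Ioc a b, u' z := by
    rw [← intervalIntegral.integral_of_le hab,
      intervalIntegral.integral_eq_sub_of_hasDerivAt hu hu']
  calc ‖u b - u a‖ₑ ^ 2 ≤ (∫⁻ z in Ioc a b, ‖u' z‖ₑ) ^ 2 := by
        rw [hftc]; gcongr; exact enorm_integral_le_lintegral_enorm _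
    _ ≤ volume (Ioc a b) * ∫⁻ z in Ioc a b, ‖u' z‖ₑ ^ 2 := by
        simpa using sq_lintegral_le_measure_univ_mul_lintegral_sq
          ((hu'.1).aestronglyMeasurable.enorm)
    _ = ENNReal.ofReal (b - a) * ∫⁻ z in Ioc a b, ‖u' z‖ₑ ^ 2 := by rw [Real.volume_Ioc]

theorem stretch_bounds {a b c y : ℝ} (hy : -1 < y) (hya : y < a) (hab : a ≤ b) (hyc : y ≤ c) :
    y ≤ (b + 1) / (a + 1) * (y + 1) - 1 ∧ (b + 1) / (a + 1) * (y + 1) - 1 < b ∧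
      (b + 1) / (a + 1) * (y + 1) - 1 - y ≤ (c + 1) * |(b + 1) / (a + 1) - 1| := by
  have ha : 0 < a + 1 := by linarith
  have hm : 1 ≤ (b + 1) / (a + 1) := by rw [le_div_iff₀ ha]; linarith
  have hcancel : (b + 1) / (a + 1) * (a + 1) = b + 1 := div_mul_cancel₀ _ ha.ne'
  rw [abs_of_nonneg (sub_nonneg.2 hm)]
  refine ⟨by nlinarith, by nlinarith, by nlinarith⟩

theorem enorm_stretch_sub_sq_le {E : Type*} [NormedAddCommGroup E] [NormedSpace ℝ E]
    [CompleteSpace E] {u u' : ℝ → E} (hu : ∀ z, HasDerivAt u (u' z) z) (hu' : Continuous u')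
    {a b c y : ℝ} (hy : -1 < y) (hya : y < a) (hab : a ≤ b) (hbc : b ≤ c) :
    ‖u ((b + 1) / (a + 1) * (y + 1) - 1) - u y‖ₑ ^ 2 ≤
      ENNReal.ofReal ((c + 1) * |(b + 1) / (a + 1) - 1|) * ∫⁻ z in Ioo (-1) b, ‖u' z‖ₑ ^ 2 := by
  obtain ⟨hle, hlt, hlen⟩ := stretch_bounds hy hya hab (by linarith)
  calc _ ≤ _ := enorm_sub_sq_le_mul_lintegral_deriv_sq hle (fun z _ => hu z)
        (hu'.intervalIntegrable _ _)
    _ ≤ _ := by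
      gcongr ENNReal.ofReal ?_ * ?_
      exact lintegral_mono_set fun z hz => ⟨hy.trans hz.1, hz.2.trans_lt hlt⟩

theorem setLIntegral_le_of_le_lintegral_fiber {α β : Type*} [MeasurableSpace α]
    [MeasurableSpace β] {μ : Measure α} {ν : Measure β} [SFinite μ] [SFinite ν]
    {S B : Set (α × β)} {Y : Set β} (hSY : S ⊆ univ ×ˢ Y) {F Φ : α × β → ℝ≥0∞}
    (hΦ : Measurable Φ) {c : ℝ≥0∞}
    (hF : ∀ p ∈ S, F p ≤ c * ∫⁻ z in {z | (p.1, z) ∈ B}, Φ (p.1, z) ∂ν) :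
    ∫⁻ p in S, F p ∂μ.prod ν ≤ c * ν Y * ∫⁻ p in B, Φ p ∂μ.prod ν := by
  -- `S` and `B` may be non-measurable: `F` is compared on `S` with the measurable function
  -- `c * G`, built from the measurable hull `C` of `B`, which integrates to the same value as `B`.
  set C := toMeasurable (μ.prod ν) B
  have hC : MeasurableSet C := measurableSet_toMeasurable _ _
  set G : α → ℝ≥0∞ := fun x => ∫⁻ z, C.indicator Φ (x, z) ∂ν
  have hG : Measurable G := (hΦ.indicator hC).lintegral_prod_right'
  have hFG : ∀ p ∈ S, F p ≤ c * G p.1 := fun p hp => by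
    refine (hF p hp).trans ?_
    gcongr
    calc ∫⁻ z in {z | (p.1, z) ∈ B}, Φ (p.1, z) ∂ν
        ≤ ∫⁻ z in {z | (p.1, z) ∈ C}, Φ (p.1, z) ∂ν :=
          lintegral_mono_set fun z hz => subset_toMeasurable _ _ hz
      _ = G p.1 := (lintegral_indicator (measurable_prodMk_left hC) _).symm
  calc ∫⁻ p in S, F p ∂μ.prod ν
      ≤ ∫⁻ p in S, c * G p.1 ∂μ.prod ν := setLIntegral_mono (by fun_prop) hFG
    _ ≤ ∫⁻ p in univ ×ˢ Y, c * G p.1 ∂μ.prod ν := lintegral_mono_set hSY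
    _ = c * ν Y * ∫⁻ x, G x ∂μ := by
      rw [← Measure.prod_restrict, Measure.restrict_univ, lintegral_prod _ (by fun_prop)]
      simp only [lintegral_const, Measure.restrict_apply_univ, ← lintegral_const_mul _ hG,
        mul_right_comm]
    _ = c * ν Y * ∫⁻ p in B, Φ p ∂μ.prod ν := by
      rw [← Measure.restrict_toMeasurable_of_sFinite, ← lintegral_indicator hC,
        lintegral_prod _ (hΦ.indicator hC).aemeasurable]

theorem integral_le_of_lintegral_enorm_le_ofReal {α : Type*} [MeasurableSpace α]
    {μ : Measure α} {f : α → ℝ} {r : ℝ} (hr : 0 ≤ r)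
    (h : ∫⁻ a, ‖f a‖ₑ ∂μ ≤ ENNReal.ofReal r) : ∫ a, f a ∂μ ≤ r := by
  refine (le_abs_self _).trans ?_
  rw [← Real.norm_eq_abs, ← ENNReal.ofReal_le_ofReal_iff hr, ofReal_norm]
  exact (enorm_integral_le_lintegral_enorm f).trans h

theorem stmt13_general (L M Km Kb : ℝ) (hM : 0 < M) (hKm : 0 ≤ Km) (hKb : 0 ≤ Kb)
    (h hb : ℝ → ℝ)
    (hreg : ∀ x ∈ Set.Ioo (0:ℝ) L, 0 ≤ hb x ∧ hb x ≤ h x ∧ h x ≤ M)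
    (hKmb : ∀ x ∈ Set.Ioo (0:ℝ) L, |(h x + 1)/(hb x + 1) - 1| ≤ Km)
    (hKbb : ∀ x ∈ Set.Ioo (0:ℝ) L, hb x ≤ Kb)
    (w wy : ℝ × ℝ → ℝ × ℝ)
    (hwy : Continuous wy)
    (hderiv : ∀ x ∈ Set.Ioo (0:ℝ) L, ∀ y : ℝ, HasDerivAt (fun z => w (x, z)) (wy (x, y)) y)
    (hint : IntegrableOn (fun p => ‖wy p‖^2)
      {p : ℝ × ℝ | p.1 ∈ Set.Ioo (0:ℝ) L ∧ p.2 ∈ Set.Ioo (-1) (h p.1)}) :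
    (∫ p in {p : ℝ × ℝ | p.1 ∈ Set.Ioo (0:ℝ) L ∧ p.2 ∈ Set.Ioo 0 (hb p.1)},
        ‖w (p.1, ((h p.1 + 1)/(hb p.1 + 1)) * (p.2 + 1) - 1) - w p‖^2) ≤
      (M + 1) * Km * Kb *
        ∫ p in {p : ℝ × ℝ | p.1 ∈ Set.Ioo (0:ℝ) L ∧ p.2 ∈ Set.Ioo (-1) (h p.1)},
          ‖wy p‖^2 := by
  set S := {p : ℝ × ℝ | p.1 ∈ Ioo (0:ℝ) L ∧ p.2 ∈ Ioo 0 (hb p.1)}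
  set B := {p : ℝ × ℝ | p.1 ∈ Ioo (0:ℝ) L ∧ p.2 ∈ Ioo (-1) (h p.1)}
  have hpoint : ∀ p ∈ S, ‖w (p.1, (h p.1 + 1) / (hb p.1 + 1) * (p.2 + 1) - 1) - w p‖ₑ ^ 2 ≤
      ENNReal.ofReal ((M + 1) * Km) * ∫⁻ z in {z | (p.1, z) ∈ B}, ‖wy (p.1, z)‖ₑ ^ 2 := by
    rintro ⟨x, y⟩ ⟨hx, hy0, hyb⟩
    obtain ⟨-, hbh, hhM⟩ := hreg x hx
    calc _ ≤ _ := enorm_stretch_sub_sq_le (hderiv x hx) (hwy.comp (by fun_prop))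
          (by linarith) hyb hbh hhM
      _ ≤ _ := by
        gcongr ENNReal.ofReal ?_ * ?_
        · exact mul_le_mul_of_nonneg_left (hKmb x hx) (by linarith)
        · exact lintegral_mono_set fun z hz => ⟨hx, hz⟩
  have hfiber := setLIntegral_le_of_le_lintegral_fiber (μ := volume) (ν := volume)
    (S := S) (Y := Ioo 0 Kb) (fun p hp => ⟨mem_univ _, hp.2.1, hp.2.2.trans_le (hKbb _ hp.1)⟩)
    (hwy.measurable.enorm.pow_const 2) hpoint
  have hB : ∫⁻ p in B, ‖wy p‖ₑ ^ 2 = ENNReal.ofReal (∫ p in B, ‖wy p‖ ^ 2) := by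
    rw [ofReal_integral_eq_lintegral_ofReal hint (ae_of_all _ fun _ => by positivity)]
    simp only [ENNReal.ofReal_pow (norm_nonneg _), ofReal_norm]
  refine integral_le_of_lintegral_enorm_le_ofReal (by positivity) ?_
  rw [← Measure.volume_eq_prod, Real.volume_Ioo, sub_zero, hB] at hfiber
  rw [ENNReal.ofReal_mul (by positivity), ENNReal.ofReal_mul (by positivity)]
  simpa only [enorm_pow, enorm_norm] using hfiber

/-- Estimate of the vertical-translation difference `w(x, m(x)(y+1)-1) - w(x,y)` on
`F_{h̲}`, in terms of `‖m-1‖_∞`, `‖h̲‖_∞` and the vertical derivative of `w` on `F_h⁻`. -/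
theorem stmt13 (L M Km Kb : ℝ) (hL : 0 < L) (hM : 0 < M) (hKm : 0 ≤ Km) (hKb : 0 ≤ Kb)
    (h hb : ℝ → ℝ)
    (hreg : ∀ x ∈ Set.Ioo (0:ℝ) L, 0 ≤ hb x ∧ hb x ≤ h x ∧ h x ≤ M)
    (hKmb : ∀ x ∈ Set.Ioo (0:ℝ) L, |(h x + 1)/(hb x + 1) - 1| ≤ Km)
    (hKbb : ∀ x ∈ Set.Ioo (0:ℝ) L, hb x ≤ Kb)
    (w wy : ℝ × ℝ → ℝ × ℝ)
    (hw : Continuous w) (hwy : Continuous wy)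
    (hderiv : ∀ x ∈ Set.Ioo (0:ℝ) L, ∀ y : ℝ, HasDerivAt (fun z => w (x, z)) (wy (x, y)) y)
    (hint : IntegrableOn (fun p => ‖wy p‖^2)
      {p : ℝ × ℝ | p.1 ∈ Set.Ioo (0:ℝ) L ∧ p.2 ∈ Set.Ioo (-1) (h p.1)}) :
    (∫ p in {p : ℝ × ℝ | p.1 ∈ Set.Ioo (0:ℝ) L ∧ p.2 ∈ Set.Ioo 0 (hb p.1)},
        ‖w (p.1, ((h p.1 + 1)/(hb p.1 + 1)) * (p.2 + 1) - 1) - w p‖^2) ≤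
      (M + 1) * Km * Kb *
        ∫ p in {p : ℝ × ℝ | p.1 ∈ Set.Ioo (0:ℝ) L ∧ p.2 ∈ Set.Ioo (-1) (h p.1)},
          ‖wy p‖^2 :=
  stmt13_general L M Km Kb hM hKm hKb h hb hreg hKmb hKbb w wy hwy hderiv hint
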